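/- Let p > 3 be prime, and suppose the point G = (x_G, y_G) lies on the nonsingular curve E : y² = x³ + Ax + B over 𝔽_p. Then the vector e = (x_G, x_G², A, B, y_G², x_G³)ᵀ ∈ 𝔽_p⁶ satisfies the linear system C·e = u, where for i = 2,…,6 the i-th row of C is (2x_i² + 2x_i(x_{i−1}+x_{i+1}), 2x_i − (x_{i−1}+x_{i+1}), 2x_i, 2, 2, −2) and the i-th entry of u is (x_{i−1}+x_{i+1})x_i², provided x_n = x(nG ⊕ W₀) for some W₀ ∈ E(𝔽_p) with W_n ≠ ±G and W_n ≠ 𝒪 for the relevant indices n = 1,…,7. -/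

import Mathlib

/-- The elliptic curve `y² = x³ + Ax + B` in affine Weierstrass form. -/
def Ecurve {k : Type*} [CommRing k] (A B : k) : WeierstrassCurve.Affine k :=
  { a₁ := 0, a₂ := 0, a₃ := 0, a₄ := A, a₆ := B }

/-- The x-coordinate of a nonsingular point, with the convention `x(𝒪) = 0`. -/
def xcoord {k : Type*} [Field k] {W : WeierstrassCurve.Affine k} : W.Point → k
  | .zero => 0
  | @WeierstrassCurve.Affine.Point.some _ _ _ x _ _ => x

open WeierstrassCurve.Affine

lemma X_ne_of_ne_of_ne_neg {F : Type*} [Field F] {W : WeierstrassCurve.Affine F} {x y x' y' : F}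
    {h : W.Nonsingular x y} {h' : W.Nonsingular x' y'}
    (hne : Point.some _ _ h ≠ Point.some _ _ h')
    (hneg : Point.some _ _ h ≠ -Point.some _ _ h') :
    x ≠ x' := by
  rintro rfl
  rcases Y_eq_of_X_eq h.1 h'.1 rfl with rfl | rfl
  · exact hne rfl
  · exact hneg (Point.neg_some h').symm

section Ecurve

variable {F : Type*} [Field F] {A B : F}

lemma Ecurve_equation_iff {x y : F} :
    (Ecurve A B).Equation x y ↔ y ^ 2 = x ^ 3 + A * x + B := by
  rw [equation_iff]
  simp only [Ecurve]
  constructor <;> intro h <;> linear_combination h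

-- The slopes from `W = (x, y)` to `±G` are `(y ∓ y_G) / (x - x_G)`; adding their squares cancels
-- the cross term `y * y_G`, leaving `2 (y² + y_G²)` with `y² = x³ + A x + B`.
lemma xcoord_sub_add_xcoord_add [DecidableEq F] {x_G y_G : F}
    (hGns : (Ecurve A B).Nonsingular x_G y_G) {W : (Ecurve A B).Point} (h0 : W ≠ 0)
    (hne : W ≠ Point.some _ _ hGns) (hneg : W ≠ -Point.some _ _ hGns) :
    (xcoord W - x_G) ^ 2 *
        (xcoord (W - Point.some _ _ hGns) + xcoord (W + Point.some _ _ hGns)) =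
      2 * (xcoord W ^ 3 + A * xcoord W + B + y_G ^ 2) -
        2 * (xcoord W + x_G) * (xcoord W - x_G) ^ 2 := by
  rcases W with _ | @⟨x, y, hW⟩
  · exact absurd rfl h0
  have hx : x ≠ x_G := X_ne_of_ne_of_ne_neg hne hneg
  have hy : y ^ 2 = x ^ 3 + A * x + B := Ecurve_equation_iff.mp hW.1
  rw [sub_eq_add_neg (Point.some _ _ hW), Point.neg_some, Point.add_of_X_ne hx,
    Point.add_of_X_ne hx]
  simp only [xcoord, slope_of_X_ne hx, addX, negY, Ecurve]
  have hdx : x - x_G ≠ 0 := sub_ne_zero.mpr hx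
  field_simp
  linear_combination 2 * hy

end Ecurve

theorem stmt13_general (p : ℕ) [Fact p.Prime]
    (A B x_G y_G : ZMod p)
    (hGns : (Ecurve A B).Nonsingular x_G y_G)
    (G W₀ : (Ecurve A B).Point)
    (hGdef : G = WeierstrassCurve.Affine.Point.some _ _ hGns)
    (Wn : ℕ → (Ecurve A B).Point) (hWn : ∀ n, Wn n = n • G + W₀)
    (xs : ℕ → ZMod p) (hxs : ∀ n, xs n = xcoord (Wn n))
    (hG : ∀ n, 1 ≤ n → n ≤ 7 → Wn n ≠ G ∧ Wn n ≠ -G)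
    (hO : ∀ n, 1 ≤ n → n ≤ 7 → Wn n ≠ 0)
    (C : Matrix (Fin 5) (Fin 6) (ZMod p))
    (hC : C = Matrix.of fun i : Fin 5 =>
      ![2 * xs ((i : ℕ) + 2) ^ 2 +
          2 * xs ((i : ℕ) + 2) * (xs ((i : ℕ) + 1) + xs ((i : ℕ) + 3)),
        2 * xs ((i : ℕ) + 2) - (xs ((i : ℕ) + 1) + xs ((i : ℕ) + 3)),
        2 * xs ((i : ℕ) + 2), 2, 2, -2])
    (u : Fin 5 → ZMod p)
    (hu : u = fun i : Fin 5 => (xs ((i : ℕ) + 1) + xs ((i : ℕ) + 3)) * xs ((i : ℕ) + 2) ^ 2) :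
    C.mulVec ![x_G, x_G ^ 2, A, B, y_G ^ 2, x_G ^ 3] = u := by
  subst hC hu
  have hstep : ∀ n, Wn (n + 1) = Wn n + G := fun n => by
    rw [hWn, hWn, succ_nsmul, add_right_comm]
  have hrow : ∀ i : Fin 5,
      (xs (i + 2) - x_G) ^ 2 * (xs (i + 1) + xs (i + 3)) =
        2 * (xs (i + 2) ^ 3 + A * xs (i + 2) + B + y_G ^ 2) -
          2 * (xs (i + 2) + x_G) * (xs (i + 2) - x_G) ^ 2 := fun i => by
    have hprev : Wn (i + 1) = Wn (i + 2) - G := by rw [hstep (i + 1), add_sub_cancel_right]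
    have hnext : Wn (i + 3) = Wn (i + 2) + G := hstep (i + 2)
    obtain ⟨hne, hneg⟩ := hG (i + 2) (by omega) (by omega)
    rw [hxs, hxs, hxs, hprev, hnext]
    subst hGdef
    exact xcoord_sub_add_xcoord_add hGns (hO (i + 2) (by omega) (by omega)) hne hneg
  funext i
  simp only [Matrix.mulVec, dotProduct, Fin.sum_univ_six, Matrix.of_apply, Matrix.cons_val_zero,
    Matrix.cons_val_one, Matrix.cons_val]
  linear_combination -hrow i

/-- Congruence (7) of the paper in matrix form: the vector
`e = (x_G, x_G², A, B, y_G², x_G³)` solves the linear system `C·e = u`, where for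
`i = 2,…,6` the `i`-th row of `C` is
`(2x_i² + 2x_i(x_{i−1}+x_{i+1}), 2x_i − (x_{i−1}+x_{i+1}), 2x_i, 2, 2, −2)` and the
`i`-th entry of `u` is `(x_{i−1}+x_{i+1})x_i²`, with `x_n = x(nG ⊕ W₀)`, `Wₙ ≠ ±G` and
`Wₙ ≠ 𝒪` for `n = 1,…,7`. -/
theorem stmt13 (p : ℕ) [Fact p.Prime] (hp : 3 < p)
    (A B x_G y_G : ZMod p)
    (hΔ : 4 * A ^ 3 + 27 * B ^ 2 ≠ 0)
    (hGns : (Ecurve A B).Nonsingular x_G y_G)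
    (G W₀ : (Ecurve A B).Point)
    (hGdef : G = WeierstrassCurve.Affine.Point.some _ _ hGns)
    (Wn : ℕ → (Ecurve A B).Point) (hWn : ∀ n, Wn n = n • G + W₀)
    (xs : ℕ → ZMod p) (hxs : ∀ n, xs n = xcoord (Wn n))
    (hG : ∀ n, 1 ≤ n → n ≤ 7 → Wn n ≠ G ∧ Wn n ≠ -G)
    (hO : ∀ n, 1 ≤ n → n ≤ 7 → Wn n ≠ 0)
    (C : Matrix (Fin 5) (Fin 6) (ZMod p))
    (hC : C = Matrix.of fun i : Fin 5 =>
      ![2 * xs ((i : ℕ) + 2) ^ 2 +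
          2 * xs ((i : ℕ) + 2) * (xs ((i : ℕ) + 1) + xs ((i : ℕ) + 3)),
        2 * xs ((i : ℕ) + 2) - (xs ((i : ℕ) + 1) + xs ((i : ℕ) + 3)),
        2 * xs ((i : ℕ) + 2), 2, 2, -2])
    (u : Fin 5 → ZMod p)
    (hu : u = fun i : Fin 5 => (xs ((i : ℕ) + 1) + xs ((i : ℕ) + 3)) * xs ((i : ℕ) + 2) ^ 2) :
    C.mulVec ![x_G, x_G ^ 2, A, B, y_G ^ 2, x_G ^ 3] = u :=
  stmt13_general p A B x_G y_G hGns G W₀ hGdef Wn hWn xs hxs hG hO C hC u hu
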